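/- arXiv:2405.17715 — 2 statements merged into one kernel-verified Lean document; each statement's English description precedes it below -/
import Mathlib

section
/- Let σ ∈ L²_loc([0,∞)), τ ∈ L¹_loc([0,∞)) be real-valued, E = k² with k > 0, and define Q, Q̃, h, w, F as indicated. Suppose Y : [0,∞) → ℂ² is continuous, satisfies Y(y) = Y(x) + ∫_x^y D(t)Y(t) dt for all 0 ≤ x ≤ y, where D(t) is the 2×2 matrix with first row (0, F(t,E)) and second row (conj(F(t,E)), 0), and satisfies Y(x) → (1,0)ᵀ as x → ∞. Then there exists an eigensolution U at energy E such that U₂(x) − exp(i(kx − (1/(2k))∫_0^x Q(t)dt)) → 0 and U₁(x) − ik·exp(i(kx − (1/(2k))∫_0^x Q(t)dt)) → 0 as x → ∞. If moreover σ ∈ L²((0,∞)), then there exists an eigensolution at energy E with WKB asymptotic behavior. -/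
open MeasureTheory Filter Set

noncomputable def lpLqNorm (p q : ℝ) (f : ℝ → ℝ) : ENNReal :=
  (∑' n : ℕ, (∫⁻ x in Set.Ico (n : ℝ) (n + 1), ENNReal.ofReal (|f x| ^ q)) ^ (p / q)) ^ (1 / p)

def MemLpLq (p q : ℝ) (f : ℝ → ℝ) : Prop :=
  Measurable f ∧ lpLqNorm p q f < ⊤

def L1loc (f : ℝ → ℝ) : Prop := LocallyIntegrableOn f (Set.Ici 0) volume

def L2loc (f : ℝ → ℝ) : Prop :=
  LocallyIntegrableOn f (Set.Ici 0) volume ∧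
  LocallyIntegrableOn (fun x => f x ^ 2) (Set.Ici 0) volume

def IsEigensolution (σ τ : ℝ → ℝ) (E : ℝ) (U₁ U₂ : ℝ → ℂ) : Prop :=
  ContinuousOn U₁ (Set.Ici 0) ∧ ContinuousOn U₂ (Set.Ici 0) ∧
  ∀ x y : ℝ, 0 ≤ x → x ≤ y →
    (U₁ y = U₁ x + ∫ t in x..y,
      ((-(σ t : ℂ)) * U₁ t + ((τ t - σ t ^ 2 - E : ℝ) : ℂ) * U₂ t)) ∧
    (U₂ y = U₂ x + ∫ t in x..y, (U₁ t + (σ t : ℂ) * U₂ t))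

noncomputable def wkbPhase (g : ℝ → ℝ) (k x : ℝ) : ℂ :=
  Complex.exp (Complex.I * ((k * x - (1 / (2 * k)) * ∫ t in (0:ℝ)..x, g t : ℝ) : ℂ))

def HasWKBwrt (g : ℝ → ℝ) (k : ℝ) (U₁ U₂ : ℝ → ℂ) : Prop :=
  Tendsto (fun x => U₂ x - wkbPhase g k x) atTop (nhds 0) ∧
  Tendsto (fun x => U₁ x - Complex.I * (k : ℂ) * wkbPhase g k x) atTop (nhds 0)

noncomputable def Ffun (σ τ : ℝ → ℝ) (k x : ℝ) : ℂ :=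
  (-Complex.I / (2 * (k : ℂ))) *
    Complex.exp ((-Complex.I) *
      ((2 * k * x - (1 / k) * ∫ t in (0:ℝ)..x, (τ t - σ t ^ 2) : ℝ) : ℂ)) *
    (((τ x - σ x ^ 2 : ℝ) : ℂ) + 2 * Complex.I * (k : ℂ) * (σ x : ℂ))

structure MartingaleStructure where
  S : ℕ → ℕ → Set ℝ
  ordConn : ∀ m j, (S m j).OrdConnected
  sub : ∀ m j, S m j ⊆ Set.Ici (0:ℝ)
  cover : ∀ m, 1 ≤ m → (⋃ j ∈ Finset.Icc 1 (2 ^ m), S m j) = Set.Ici (0:ℝ)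
  disj : ∀ m, 1 ≤ m → ∀ i j, 1 ≤ i → i ≤ 2 ^ m → 1 ≤ j → j ≤ 2 ^ m → i ≠ j →
    Disjoint (S m i) (S m j)
  mono : ∀ m, 1 ≤ m → ∀ i j, 1 ≤ i → i < j → j ≤ 2 ^ m →
    ∀ x ∈ S m i, ∀ y ∈ S m j, x < y
  split : ∀ m j, 1 ≤ m → 1 ≤ j → j ≤ 2 ^ m → S m j = S (m+1) (2*j-1) ∪ S (m+1) (2*j)

noncomputable def Bnorm (M : MartingaleStructure) (s : ℝ) (f : ℝ → ℂ) : ENNReal :=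
  ∑' m : ℕ, ENNReal.ofReal ((m : ℝ) ^ s *
    Real.sqrt (∑ j ∈ Finset.Icc 1 (2 ^ m), ‖∫ x in M.S m j, f x‖ ^ 2))

def AdaptedTo (M : MartingaleStructure) (p : ℝ) (f : ℝ → ℝ) : Prop :=
  ∀ m j, 1 ≤ m → 1 ≤ j → j ≤ 2 ^ m →
    lpLqNorm p 1 ((M.S m j).indicator f) ^ p ≤ (2 : ENNReal) ^ (-(m : ℝ)) * lpLqNorm p 1 f ^ p

open scoped Nat

lemma my_triangle_fubini {x y : ℝ} (hxy : x ≤ y) {f g : ℝ → ℂ}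
    (hf : IntegrableOn f (Ioc x y)) (hg : IntegrableOn g (Ioc x y)) :
    ((∫ t in x..y, (∫ s in x..t, f s) * g t) + ∫ t in x..y, f t * ∫ s in x..t, g s)
      = (∫ t in x..y, f t) * ∫ t in x..y, g t := by
  set μ := volume.restrict (Ioc x y) with hμdef
  have hfμ : Integrable f μ := hf
  have hgμ : Integrable g μ := hg
  have h1 : ∀ t ∈ Ioc x y, (∫ s in x..t, f s) = ∫ s, (Iic t).indicator f s ∂μ := by
    intro t ht
    have hset : Iic t ∩ Ioc x y = Ioc x t := by
      ext s
      simp only [mem_inter_iff, mem_Iic, mem_Ioc]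
      exact ⟨fun ⟨a, b, _⟩ => ⟨b, a⟩, fun ⟨a, b⟩ => ⟨b, a, b.trans ht.2⟩⟩
    rw [intervalIntegral.integral_of_le ht.1.le, hμdef, integral_indicator measurableSet_Iic,
      Measure.restrict_restrict measurableSet_Iic, hset]
  have h2 : ∀ t ∈ Ioc x y, (∫ s in x..t, g s) = ∫ s, (Iio t).indicator g s ∂μ := by
    intro t ht
    have hset : Iio t ∩ Ioc x y = Ioo x t := by
      ext s
      simp only [mem_inter_iff, mem_Iio, mem_Ioc, mem_Ioo]
      exact ⟨fun ⟨a, b, _⟩ => ⟨b, a⟩, fun ⟨a, b⟩ => ⟨b, a, b.le.trans ht.2⟩⟩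
    rw [intervalIntegral.integral_of_le ht.1.le, integral_Ioc_eq_integral_Ioo, hμdef,
      integral_indicator measurableSet_Iio, Measure.restrict_restrict measurableSet_Iio, hset]
  have hmeas1 : MeasurableSet {z : ℝ × ℝ | z.2 ≤ z.1} :=
    measurableSet_le measurable_snd measurable_fst
  have hmeas2 : MeasurableSet {z : ℝ × ℝ | z.2 < z.1} :=
    measurableSet_lt measurable_snd measurable_fst
  have hmeas3 : MeasurableSet {z : ℝ × ℝ | z.1 < z.2} :=
    measurableSet_lt measurable_fst measurable_snd
  have hbase : Integrable (fun z : ℝ × ℝ => f z.2 * g z.1) (μ.prod μ) := by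
    have := hgμ.mul_prod hfμ
    simpa [mul_comm] using this
  have hInt1 : Integrable (fun z : ℝ × ℝ => (Iic z.1).indicator f z.2 * g z.1) (μ.prod μ) := by
    have heq : (fun z : ℝ × ℝ => (Iic z.1).indicator f z.2 * g z.1)
        = {z : ℝ × ℝ | z.2 ≤ z.1}.indicator (fun z => f z.2 * g z.1) := by
      ext z
      by_cases h : z.2 ≤ z.1 <;> simp [Set.indicator_apply, h]
    rw [heq]
    exact hbase.indicator hmeas1
  have hInt2 : Integrable (fun z : ℝ × ℝ => f z.1 * (Iio z.1).indicator g z.2) (μ.prod μ) := by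
    have heq : (fun z : ℝ × ℝ => f z.1 * (Iio z.1).indicator g z.2)
        = {z : ℝ × ℝ | z.2 < z.1}.indicator (fun z => f z.1 * g z.2) := by
      ext z
      by_cases h : z.2 < z.1 <;> simp [Set.indicator_apply, h]
    rw [heq]
    exact (hfμ.mul_prod hgμ).indicator hmeas2
  have hInt2' : Integrable (fun z : ℝ × ℝ => f z.2 * (Iio z.2).indicator g z.1) (μ.prod μ) := by
    have heq : (fun z : ℝ × ℝ => f z.2 * (Iio z.2).indicator g z.1)
        = {z : ℝ × ℝ | z.1 < z.2}.indicator (fun z => f z.2 * g z.1) := by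
      ext z
      by_cases h : z.1 < z.2 <;> simp [Set.indicator_apply, h]
    rw [heq]
    exact hbase.indicator hmeas3
  have T1 : (∫ t in x..y, (∫ s in x..t, f s) * g t)
      = ∫ z, (Iic z.1).indicator f z.2 * g z.1 ∂(μ.prod μ) := by
    have e1 : (∫ t in x..y, (∫ s in x..t, f s) * g t)
        = ∫ t, (∫ s, (Iic t).indicator f s * g t ∂μ) ∂μ := by
      rw [intervalIntegral.integral_of_le hxy]
      refine setIntegral_congr_fun measurableSet_Ioc (fun t ht => ?_)
      rw [h1 t ht]
      exact (integral_mul_const _ _).symm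
    rw [e1]
    exact MeasureTheory.integral_integral (f := fun t s => (Iic t).indicator f s * g t) hInt1
  have T2 : (∫ t in x..y, f t * ∫ s in x..t, g s)
      = ∫ z, f z.2 * (Iio z.2).indicator g z.1 ∂(μ.prod μ) := by
    have swap : ∫ z, f z.2 * (Iio z.2).indicator g z.1 ∂(μ.prod μ)
        = ∫ z, f z.1 * (Iio z.1).indicator g z.2 ∂(μ.prod μ) := by
      have := MeasureTheory.integral_prod_swap (μ := μ) (ν := μ)
        (fun z : ℝ × ℝ => f z.1 * (Iio z.1).indicator g z.2)
      simpa using this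
    have e2 : (∫ t in x..y, f t * ∫ s in x..t, g s)
        = ∫ t, (∫ s, f t * (Iio t).indicator g s ∂μ) ∂μ := by
      rw [intervalIntegral.integral_of_le hxy]
      refine setIntegral_congr_fun measurableSet_Ioc (fun t ht => ?_)
      rw [h2 t ht]
      exact (integral_const_mul _ _).symm
    rw [e2, swap]
    exact MeasureTheory.integral_integral (f := fun t s => f t * (Iio t).indicator g s) hInt2
  rw [T1, T2, ← integral_add hInt1 hInt2']
  have key : ∀ z : ℝ × ℝ, (Iic z.1).indicator f z.2 * g z.1
      + f z.2 * (Iio z.2).indicator g z.1 = g z.1 * f z.2 := by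
    intro z
    by_cases h : z.2 ≤ z.1
    · have h2 : ¬ z.1 < z.2 := not_lt.2 h
      simp [Set.indicator_apply, h, h2, mul_comm]
    · have h2 : z.1 < z.2 := not_le.1 h
      simp [Set.indicator_apply, h, h2, mul_comm]
  calc ∫ z, ((Iic z.1).indicator f z.2 * g z.1 + f z.2 * (Iio z.2).indicator g z.1) ∂(μ.prod μ)
      = ∫ z, g z.1 * f z.2 ∂(μ.prod μ) := by
        exact integral_congr_ae (Eventually.of_forall key)
    _ = (∫ t, g t ∂μ) * ∫ t, f t ∂μ := MeasureTheory.integral_prod_mul g f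
    _ = (∫ t in x..y, f t) * ∫ t in x..y, g t := by
        rw [intervalIntegral.integral_of_le hxy, intervalIntegral.integral_of_le hxy, mul_comm]

lemma my_prod_rule {x y : ℝ} (hxy : x ≤ y) {F G f g : ℝ → ℂ}
    (hf : IntervalIntegrable f volume x y) (hg : IntervalIntegrable g volume x y)
    (hF : ∀ t ∈ Icc x y, F t = F x + ∫ s in x..t, f s)
    (hG : ∀ t ∈ Icc x y, G t = G x + ∫ s in x..t, g s) :
    F y * G y = F x * G x + ∫ t in x..y, (f t * G t + F t * g t) := by
  have huIcc : uIcc x y = Icc x y := uIcc_of_le hxy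
  have hfc : ContinuousOn (fun t => ∫ s in x..t, f s) (uIcc x y) := by
    refine intervalIntegral.continuousOn_primitive_interval' hf ?_
    rw [huIcc]; exact left_mem_Icc.2 hxy
  have hgc : ContinuousOn (fun t => ∫ s in x..t, g s) (uIcc x y) := by
    refine intervalIntegral.continuousOn_primitive_interval' hg ?_
    rw [huIcc]; exact left_mem_Icc.2 hxy
  have i1 : IntervalIntegrable (fun t => f t * G x) volume x y := hf.mul_const _
  have i2 : IntervalIntegrable (fun t => F x * g t) volume x y := hg.const_mul _
  have i3 : IntervalIntegrable (fun t => f t * ∫ s in x..t, g s) volume x y :=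
    hf.mul_continuousOn hgc
  have i4 : IntervalIntegrable (fun t => (∫ s in x..t, f s) * g t) volume x y :=
    hg.continuousOn_mul hfc
  have congr1 : (∫ t in x..y, (f t * G t + F t * g t))
      = ∫ t in x..y, ((f t * G x + F x * g t) +
          ((∫ s in x..t, f s) * g t + f t * ∫ s in x..t, g s)) := by
    refine intervalIntegral.integral_congr (fun t ht => ?_)
    rw [huIcc] at ht
    rw [hF t ht, hG t ht]
    ring
  rw [congr1, intervalIntegral.integral_add (i1.add i2) (i4.add i3),
    intervalIntegral.integral_add i1 i2, intervalIntegral.integral_add i4 i3,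
    my_triangle_fubini hxy hf.1 hg.1,
    intervalIntegral.integral_mul_const, intervalIntegral.integral_const_mul,
    hF y (right_mem_Icc.2 hxy), hG y (right_mem_Icc.2 hxy)]
  ring

lemma my_pow_rule {x y : ℝ} (hxy : x ≤ y) {p : ℝ → ℂ}
    (hp : IntervalIntegrable p volume x y) (n : ℕ) :
    ∀ t ∈ Icc x y, (∫ s in x..t, p s) ^ (n + 1)
      = ∫ s in x..t, ((n : ℂ) + 1) * p s * (∫ r in x..s, p r) ^ n := by
  induction n with
  | zero =>
    intro t ht
    simp
  | succ n ih =>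
    intro t ht
    have hp' : IntervalIntegrable p volume x t := by
      refine hp.mono_set ?_
      rw [uIcc_of_le ht.1, uIcc_of_le hxy]
      exact Icc_subset_Icc_right ht.2
    have hA : ContinuousOn (fun u => ∫ s in x..u, p s) (uIcc x t) := by
      refine intervalIntegral.continuousOn_primitive_interval' hp' ?_
      rw [uIcc_of_le ht.1]; exact left_mem_Icc.2 ht.1
    have hf : IntervalIntegrable
        (fun u => ((n : ℂ) + 1) * p u * (∫ r in x..u, p r) ^ n) volume x t :=
      (hp'.const_mul _).mul_continuousOn (hA.pow n)
    have hF : ∀ u ∈ Icc x t, (∫ s in x..u, p s) ^ (n + 1)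
        = (∫ s in x..x, p s) ^ (n + 1)
          + ∫ s in x..u, ((n : ℂ) + 1) * p s * (∫ r in x..s, p r) ^ n := by
      intro u hu
      rw [intervalIntegral.integral_same, zero_pow (Nat.succ_ne_zero n)]
      rw [ih u ⟨hu.1, hu.2.trans ht.2⟩, zero_add]
    have hG : ∀ u ∈ Icc x t, (∫ s in x..u, p s)
        = (∫ s in x..x, p s) + ∫ s in x..u, p s := by
      intro u _
      rw [intervalIntegral.integral_same, zero_add]
    have key := my_prod_rule ht.1 hf hp' hF hG
    rw [intervalIntegral.integral_same, zero_pow (Nat.succ_ne_zero n), zero_mul, zero_add] at key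
    have : (∫ s in x..t, p s) ^ (n + 1 + 1) = (∫ s in x..t, p s) ^ (n + 1) * ∫ s in x..t, p s :=
      pow_succ _ _
    rw [this, key]
    refine intervalIntegral.integral_congr fun s _ => ?_
    push_cast
    ring

lemma my_exp_rule {x y : ℝ} (hxy : x ≤ y) {p : ℝ → ℂ}
    (hp : IntervalIntegrable p volume x y) (c : ℂ) :
    Complex.exp (c + ∫ s in x..y, p s)
      = Complex.exp c + ∫ t in x..y, p t * Complex.exp (c + ∫ s in x..t, p s) := by
  have hexp_tsum : ∀ z : ℂ, Complex.exp z = ∑' n : ℕ, z ^ n / n ! := by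
    intro z
    rw [Complex.exp_eq_exp_ℂ, NormedSpace.exp_eq_tsum_div]
  have hsummable : ∀ z : ℂ, Summable (fun n : ℕ => z ^ n / (n ! : ℂ)) := fun z =>
    NormedSpace.expSeries_div_summable z
  have hA : ContinuousOn (fun u => ∫ s in x..u, p s) (uIcc x y) := by
    refine intervalIntegral.continuousOn_primitive_interval' hp ?_
    rw [uIcc_of_le hxy]; exact left_mem_Icc.2 hxy
  obtain ⟨M, hM⟩ := (isCompact_uIcc (a := x) (b := y)).exists_bound_of_continuousOn hA
  -- main claim with c = 0
  have main : Complex.exp (∫ s in x..y, p s)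
      = 1 + ∫ t in x..y, p t * Complex.exp (∫ s in x..t, p s) := by
    have step1 : Complex.exp (∫ s in x..y, p s)
        = 1 + ∑' n : ℕ, (∫ s in x..y, p s) ^ (n + 1) / ((n + 1)! : ℂ) := by
      rw [hexp_tsum, (hsummable _).tsum_eq_zero_add]
      simp
    have step2 : ∀ n : ℕ, (∫ s in x..y, p s) ^ (n + 1) / ((n + 1)! : ℂ)
        = ∫ t in x..y, p t * ((∫ s in x..t, p s) ^ n / (n ! : ℂ)) := by
      intro n
      rw [my_pow_rule hxy hp n y (right_mem_Icc.2 hxy), ← intervalIntegral.integral_div]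
      refine intervalIntegral.integral_congr fun t _ => ?_
      have hfact : ((n + 1)! : ℂ) = ((n : ℂ) + 1) * (n ! : ℂ) := by
        rw [Nat.factorial_succ]; push_cast; ring
      have h1 : ((n : ℂ) + 1) ≠ 0 := Nat.cast_add_one_ne_zero n
      have h2 : (n ! : ℂ) ≠ 0 := Nat.cast_ne_zero.2 (Nat.factorial_ne_zero n)
      rw [hfact]
      field_simp
    have hFn_int : ∀ n : ℕ, Integrable
        (fun t => p t * ((∫ s in x..t, p s) ^ n / (n ! : ℂ)))
        (volume.restrict (Ioc x y)) := by
      intro n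
      have := (hp.mul_continuousOn ((hA.pow n).div_const ((n ! : ℂ)))).1
      exact this
    have hnorm : Summable (fun n : ℕ =>
        ∫ t, ‖p t * ((∫ s in x..t, p s) ^ n / (n ! : ℂ))‖ ∂(volume.restrict (Ioc x y))) := by
      have hM0 : 0 ≤ M := le_trans (norm_nonneg _) (hM x left_mem_uIcc)
      refine Summable.of_nonneg_of_le (fun n => integral_nonneg fun t => norm_nonneg _)
        (fun n => ?_) (((Real.summable_pow_div_factorial M)).mul_left
          (∫ t, ‖p t‖ ∂(volume.restrict (Ioc x y))))
      have hb : ∀ t ∈ Ioc x y, ‖p t * ((∫ s in x..t, p s) ^ n / (n ! : ℂ))‖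
          ≤ ‖p t‖ * (M ^ n / n !) := by
        intro t ht
        have htI : t ∈ uIcc x y := by
          rw [uIcc_of_le hxy]; exact ⟨ht.1.le, ht.2⟩
        have hfn : ‖(n ! : ℂ)‖ = (n ! : ℝ) := by
          simp [Complex.norm_natCast]
        rw [norm_mul, norm_div, hfn]
        have hpow : ‖(∫ s in x..t, p s) ^ n‖ ≤ M ^ n := by
          rw [norm_pow]
          exact pow_le_pow_left₀ (norm_nonneg _) (hM t htI) n
        have hden : (0:ℝ) < (n ! : ℝ) := by exact_mod_cast Nat.factorial_pos n
        gcongr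
      calc ∫ t, ‖p t * ((∫ s in x..t, p s) ^ n / (n ! : ℂ))‖ ∂(volume.restrict (Ioc x y))
          ≤ ∫ t, ‖p t‖ * (M ^ n / n !) ∂(volume.restrict (Ioc x y)) := by
            refine setIntegral_mono_on (hFn_int n).norm (hp.1.norm.mul_const _)
              measurableSet_Ioc hb
        _ = (∫ t, ‖p t‖ ∂(volume.restrict (Ioc x y))) * (M ^ n / n !) :=
            integral_mul_const _ _
    have hswap := hasSum_integral_of_summable_integral_norm hFn_int hnorm
    have hpt : ∀ t, ∑' n : ℕ, p t * ((∫ s in x..t, p s) ^ n / (n ! : ℂ))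
        = p t * Complex.exp (∫ s in x..t, p s) := by
      intro t
      rw [tsum_mul_left, ← hexp_tsum]
    rw [step1]
    congr 1
    have := hswap.tsum_eq
    calc ∑' n : ℕ, (∫ s in x..y, p s) ^ (n + 1) / ((n + 1)! : ℂ)
        = ∑' n : ℕ, ∫ t in x..y, p t * ((∫ s in x..t, p s) ^ n / (n ! : ℂ)) := by
          exact tsum_congr step2
      _ = ∑' n : ℕ, ∫ t, (p t * ((∫ s in x..t, p s) ^ n / (n ! : ℂ)))
            ∂(volume.restrict (Ioc x y)) := by
          refine tsum_congr fun n => ?_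
          rw [intervalIntegral.integral_of_le hxy]
      _ = ∫ t, ∑' n : ℕ, (p t * ((∫ s in x..t, p s) ^ n / (n ! : ℂ)))
            ∂(volume.restrict (Ioc x y)) := this
      _ = ∫ t in x..y, p t * Complex.exp (∫ s in x..t, p s) := by
          rw [intervalIntegral.integral_of_le hxy]
          exact integral_congr_ae (Eventually.of_forall fun t => hpt t)
  calc Complex.exp (c + ∫ s in x..y, p s)
      = Complex.exp c * Complex.exp (∫ s in x..y, p s) := Complex.exp_add _ _
    _ = Complex.exp c * (1 + ∫ t in x..y, p t * Complex.exp (∫ s in x..t, p s)) := by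
        rw [main]
    _ = Complex.exp c + ∫ t in x..y, p t * Complex.exp (c + ∫ s in x..t, p s) := by
        rw [mul_add, mul_one, ← intervalIntegral.integral_const_mul]
        congr 1
        refine intervalIntegral.integral_congr fun t _ => ?_
        rw [Complex.exp_add]
        ring

lemma my_cont_primitive {f : ℝ → ℝ} (hf : ∀ b : ℝ, 0 ≤ b → IntegrableOn f (Icc 0 b) volume) :
    ContinuousOn (fun t => ∫ s in (0:ℝ)..t, f s) (Ici 0) := by
  intro t₀ ht₀
  have ht₀' : (0:ℝ) ≤ t₀ := ht₀
  have h1 : ContinuousOn (fun t => ∫ s in Ioc 0 t, f s) (Icc 0 (t₀ + 1)) :=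
    intervalIntegral.continuousOn_primitive (hf _ (by linarith))
  have h2 : ContinuousOn (fun t => ∫ s in (0:ℝ)..t, f s) (Icc 0 (t₀ + 1)) :=
    h1.congr fun t ht => intervalIntegral.integral_of_le ht.1
  have h3 := h2 t₀ ⟨ht₀', by linarith⟩
  have hmem : Iio (t₀ + 1) ∈ nhds t₀ := Iio_mem_nhds (by linarith)
  rw [← continuousWithinAt_inter hmem]
  exact h3.mono fun s hs => ⟨hs.1, hs.2.le⟩

lemma my_II_conj {f : ℝ → ℂ} {a b : ℝ} (h : IntervalIntegrable f volume a b) :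
    IntervalIntegrable (fun t => (starRingEnd ℂ) (f t)) volume a b := by
  refine ⟨?_, ?_⟩
  · simpa [IntegrableOn] using (LinearIsometryEquiv.integrable_comp_iff Complex.conjLIE).2 h.1
  · simpa [IntegrableOn] using (LinearIsometryEquiv.integrable_comp_iff Complex.conjLIE).2 h.2



/-- a solution Y of the transformed system Y' = D Y with Y → (1,0)ᵀ yields an
eigensolution with WKB-type asymptotics w.r.t. Q = τ - σ²; if moreover σ ∈ L²((0,∞)),
an eigensolution with WKB asymptotic behavior (w.r.t. τ). -/
theorem equiv_solutions
    (σ τ : ℝ → ℝ) (hσ : L2loc σ) (hτ : L1loc τ)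
    (E k : ℝ) (hk : 0 < k) (hE : E = k ^ 2)
    (Y₁ Y₂ : ℝ → ℂ)
    (hY₁c : ContinuousOn Y₁ (Set.Ici 0)) (hY₂c : ContinuousOn Y₂ (Set.Ici 0))
    (hYeq : ∀ x y : ℝ, 0 ≤ x → x ≤ y →
      (Y₁ y = Y₁ x + ∫ t in x..y, Ffun σ τ k t * Y₂ t) ∧
      (Y₂ y = Y₂ x + ∫ t in x..y, (starRingEnd ℂ) (Ffun σ τ k t) * Y₁ t))
    (hYlim₁ : Tendsto Y₁ atTop (nhds 1)) (hYlim₂ : Tendsto Y₂ atTop (nhds 0)) :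
    (∃ U₁ U₂ : ℝ → ℂ, IsEigensolution σ τ E U₁ U₂ ∧
      HasWKBwrt (fun x => τ x - σ x ^ 2) k U₁ U₂) ∧
    (MemLp σ 2 (volume.restrict (Set.Ioi 0)) →
      ∃ U₁ U₂ : ℝ → ℂ, IsEigensolution σ τ E U₁ U₂ ∧ HasWKBwrt τ k U₁ U₂) := by
  subst hE
  have hk0 : (k : ℂ) ≠ 0 := by exact_mod_cast ne_of_gt hk
  have h2k0 : (2 * (k : ℂ)) ≠ 0 := mul_ne_zero two_ne_zero hk0
  have hKinv : (2 * (k : ℂ)) * (2 * (k : ℂ))⁻¹ = 1 := mul_inv_cancel₀ h2k0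
  -- basic integrability
  have haux : ∀ (f : ℝ → ℝ), LocallyIntegrableOn f (Ici 0) volume →
      ∀ a b : ℝ, 0 ≤ a → a ≤ b → IntervalIntegrable f volume a b := by
    intro f hf a b ha hab
    have hsub : Icc a b ⊆ Ici 0 := fun t ht => le_trans ha ht.1
    have h1 : IntegrableOn f (Icc a b) volume :=
      hf.integrableOn_compact_subset hsub isCompact_Icc
    have h2 : IntegrableOn f (uIcc a b) volume := by rwa [uIcc_of_le hab]
    exact h2.intervalIntegrable
  have hτi : ∀ a b : ℝ, 0 ≤ a → a ≤ b → IntervalIntegrable τ volume a b := haux τ hτ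
  have hσi : ∀ a b : ℝ, 0 ≤ a → a ≤ b → IntervalIntegrable σ volume a b := haux σ hσ.1
  have hσ2i : ∀ a b : ℝ, 0 ≤ a → a ≤ b → IntervalIntegrable (fun t => σ t ^ 2) volume a b :=
    haux _ hσ.2
  have hQi : ∀ a b : ℝ, 0 ≤ a → a ≤ b →
      IntervalIntegrable (fun t => τ t - σ t ^ 2) volume a b :=
    fun a b ha hab => (hτi a b ha hab).sub (hσ2i a b ha hab)
  have hQci : ∀ a b : ℝ, 0 ≤ a → a ≤ b →
      IntervalIntegrable (fun t => ((τ t - σ t ^ 2 : ℝ) : ℂ)) volume a b :=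
    fun a b ha hab => ⟨(hQi a b ha hab).1.ofReal, (hQi a b ha hab).2.ofReal⟩
  have hσci : ∀ a b : ℝ, 0 ≤ a → a ≤ b →
      IntervalIntegrable (fun t => ((σ t : ℝ) : ℂ)) volume a b :=
    fun a b ha hab => ⟨(hσi a b ha hab).1.ofReal, (hσi a b ha hab).2.ofReal⟩
  -- continuity of the primitive of Q
  have hQIcc : ∀ b : ℝ, 0 ≤ b → IntegrableOn (fun t => τ t - σ t ^ 2) (Icc 0 b) volume := by
    intro b hb
    have h1 : IntegrableOn τ (Icc 0 b) volume :=
      hτ.integrableOn_compact_subset (fun t ht => ht.1) isCompact_Icc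
    have h2 : IntegrableOn (fun t => σ t ^ 2) (Icc 0 b) volume :=
      hσ.2.integrableOn_compact_subset (fun t ht => ht.1) isCompact_Icc
    exact h1.sub h2
  have hQprim : ContinuousOn (fun t => ∫ s in (0:ℝ)..t, (τ s - σ s ^ 2)) (Ici 0) :=
    my_cont_primitive hQIcc
  -- the two exponentials and the phase derivative
  set Ep : ℝ → ℂ := fun t =>
    Complex.exp (Complex.I * ((k * t - 1 / (2 * k) * ∫ s in (0:ℝ)..t, (τ s - σ s ^ 2) : ℝ) : ℂ))
    with hEp
  set Em : ℝ → ℂ := fun t =>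
    Complex.exp (-(Complex.I * ((k * t - 1 / (2 * k) * ∫ s in (0:ℝ)..t, (τ s - σ s ^ 2) : ℝ) : ℂ)))
    with hEm
  set pf : ℝ → ℂ := fun t =>
    Complex.I * ((k : ℂ) - ((τ t - σ t ^ 2 : ℝ) : ℂ) / (2 * (k : ℂ))) with hpf
  set U1 : ℝ → ℂ := fun t => Complex.I * (k : ℂ) * (Y₁ t * Ep t - Y₂ t * Em t) with hU1
  set U2 : ℝ → ℂ := fun t => Y₁ t * Ep t + Y₂ t * Em t with hU2
  have hwkbQ : wkbPhase (fun u => τ u - σ u ^ 2) k = Ep := rfl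
  have hEp_norm : ∀ t, ‖Ep t‖ = 1 := by
    intro t
    simp [hEp, Complex.norm_exp]
  have hEm_norm : ∀ t, ‖Em t‖ = 1 := by
    intro t
    simp [hEm, Complex.norm_exp]
  have hEpEm : ∀ t, Ep t * Em t = 1 := by
    intro t
    rw [hEp, hEm, ← Complex.exp_add]
    simp
  -- continuity
  have hφRc : ContinuousOn (fun t => k * t - 1 / (2 * k) * ∫ s in (0:ℝ)..t, (τ s - σ s ^ 2))
      (Ici 0) := ((continuous_const.mul continuous_id).continuousOn).sub
        (continuousOn_const.mul hQprim)
  have hEpc : ContinuousOn Ep (Ici 0) := by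
    rw [hEp]
    exact Complex.continuous_exp.comp_continuousOn
      (continuousOn_const.mul (Complex.continuous_ofReal.comp_continuousOn hφRc))
  have hEmc : ContinuousOn Em (Ici 0) := by
    rw [hEm]
    exact Complex.continuous_exp.comp_continuousOn
      (continuousOn_const.mul (Complex.continuous_ofReal.comp_continuousOn hφRc)).neg
  have hU1c : ContinuousOn U1 (Ici 0) := by
    rw [hU1]
    exact continuousOn_const.mul ((hY₁c.mul hEpc).sub (hY₂c.mul hEmc))
  have hU2c : ContinuousOn U2 (Ici 0) := (hY₁c.mul hEpc).add (hY₂c.mul hEmc)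
  -- interval integrability of pf
  have hpfi : ∀ a b : ℝ, 0 ≤ a → a ≤ b → IntervalIntegrable pf volume a b := by
    intro a b ha hab
    rw [hpf]
    exact ((intervalIntegrable_const).sub ((hQci a b ha hab).div_const _)).const_mul _
  -- phase identity
  have hphase : ∀ a t : ℝ, 0 ≤ a → a ≤ t →
      Complex.I * ((k * t - 1 / (2 * k) * ∫ s in (0:ℝ)..t, (τ s - σ s ^ 2) : ℝ) : ℂ)
        = Complex.I * ((k * a - 1 / (2 * k) * ∫ s in (0:ℝ)..a, (τ s - σ s ^ 2) : ℝ) : ℂ)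
          + ∫ s in a..t, pf s := by
    intro a t ha hat
    have hadd := intervalIntegral.integral_add_adjacent_intervals
      (hQi 0 a le_rfl ha) (hQi a t ha hat)
    have h1 : (∫ s in a..t, pf s)
        = Complex.I * (((t - a : ℝ) : ℂ) * (k : ℂ)
            - (((∫ s in a..t, (τ s - σ s ^ 2)) : ℝ) : ℂ) / (2 * (k : ℂ))) := by
      rw [hpf, intervalIntegral.integral_const_mul,
        intervalIntegral.integral_sub intervalIntegrable_const
          ((hQci a t ha hat).div_const _),
        intervalIntegral.integral_const, intervalIntegral.integral_div,
        intervalIntegral.integral_ofReal, Complex.real_smul]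
    have h2 : (∫ s in (0:ℝ)..t, (τ s - σ s ^ 2))
        = (∫ s in (0:ℝ)..a, (τ s - σ s ^ 2)) + ∫ s in a..t, (τ s - σ s ^ 2) := hadd.symm
    rw [h1, h2]
    push_cast
    ring
  -- integral equations for Ep and Em
  have hEp_eq : ∀ a t : ℝ, 0 ≤ a → a ≤ t → Ep t = Ep a + ∫ s in a..t, pf s * Ep s := by
    intro a t ha hat
    simp only [hEp]
    rw [hphase a t ha hat, my_exp_rule hat (hpfi a t ha hat) _]
    congr 1
    refine intervalIntegral.integral_congr fun s hs => ?_
    rw [uIcc_of_le hat] at hs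
    rw [← hphase a s ha hs.1]
  have hEm_eq : ∀ a t : ℝ, 0 ≤ a → a ≤ t → Em t = Em a + ∫ s in a..t, -pf s * Em s := by
    intro a t ha hat
    have keyn : -(Complex.I * ((k * t - 1 / (2 * k) * ∫ s in (0:ℝ)..t, (τ s - σ s ^ 2) : ℝ) : ℂ))
        = -(Complex.I * ((k * a - 1 / (2 * k) * ∫ s in (0:ℝ)..a, (τ s - σ s ^ 2) : ℝ) : ℂ))
          + ∫ s in a..t, -pf s := by
      rw [hphase a t ha hat, intervalIntegral.integral_neg]
      ring
    simp only [hEm]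
    rw [keyn, my_exp_rule (p := fun s => -pf s) hat (hpfi a t ha hat).neg _]
    congr 1
    refine intervalIntegral.integral_congr fun s hs => ?_
    rw [uIcc_of_le hat] at hs
    have keyn' : -(Complex.I * ((k * s - 1 / (2 * k) * ∫ r in (0:ℝ)..s, (τ r - σ r ^ 2) : ℝ) : ℂ))
        = -(Complex.I * ((k * a - 1 / (2 * k) * ∫ r in (0:ℝ)..a, (τ r - σ r ^ 2) : ℝ) : ℂ))
          + ∫ r in a..s, -pf r := by
      rw [hphase a s ha hs.1, intervalIntegral.integral_neg]
      ring
    rw [← keyn']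
  -- pointwise formulas for Ffun and its conjugate
  have hsc1 : ∀ t : ℝ, (-Complex.I / (2 * (k : ℂ)))
      * (((τ t - σ t ^ 2 : ℝ) : ℂ) + 2 * Complex.I * (k : ℂ) * ((σ t : ℝ) : ℂ))
      = ((σ t : ℝ) : ℂ) - Complex.I * ((τ t - σ t ^ 2 : ℝ) : ℂ) / (2 * (k : ℂ)) := by
    intro t
    linear_combination (-(2 * (k : ℂ) * ((σ t : ℝ) : ℂ) * (2 * (k : ℂ))⁻¹)) * Complex.I_mul_I
      + ((σ t : ℝ) : ℂ) * hKinv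
  have hsc2 : ∀ t : ℝ, (Complex.I / (2 * (k : ℂ)))
      * (((τ t - σ t ^ 2 : ℝ) : ℂ) - 2 * Complex.I * (k : ℂ) * ((σ t : ℝ) : ℂ))
      = ((σ t : ℝ) : ℂ) + Complex.I * ((τ t - σ t ^ 2 : ℝ) : ℂ) / (2 * (k : ℂ)) := by
    intro t
    linear_combination (-(2 * (k : ℂ) * ((σ t : ℝ) : ℂ) * (2 * (k : ℂ))⁻¹)) * Complex.I_mul_I
      + ((σ t : ℝ) : ℂ) * hKinv
  have hF_eq : ∀ t : ℝ, Ffun σ τ k t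
      = (((σ t : ℝ) : ℂ) - Complex.I * ((τ t - σ t ^ 2 : ℝ) : ℂ) / (2 * (k : ℂ))) * Em t ^ 2 := by
    intro t
    have hexp2 : Complex.exp ((-Complex.I)
        * ((2 * k * t - 1 / k * ∫ s in (0:ℝ)..t, (τ s - σ s ^ 2) : ℝ) : ℂ)) = Em t ^ 2 := by
      rw [hEm, sq, ← Complex.exp_add]
      congr 1
      push_cast
      ring
    rw [← hsc1 t, ← hexp2]
    simp only [Ffun]
    ring
  have hFc_eq : ∀ t : ℝ, (starRingEnd ℂ) (Ffun σ τ k t)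
      = (((σ t : ℝ) : ℂ) + Complex.I * ((τ t - σ t ^ 2 : ℝ) : ℂ) / (2 * (k : ℂ))) * Ep t ^ 2 := by
    intro t
    have hconj : (starRingEnd ℂ) (Ffun σ τ k t)
        = (Complex.I / (2 * (k : ℂ)))
          * Complex.exp (Complex.I * ((2 * k * t - 1 / k * ∫ s in (0:ℝ)..t, (τ s - σ s ^ 2) : ℝ) : ℂ))
          * (((τ t - σ t ^ 2 : ℝ) : ℂ) - 2 * Complex.I * (k : ℂ) * ((σ t : ℝ) : ℂ)) := by
      simp only [Ffun, map_mul, map_div₀, map_add, map_sub, map_neg, map_ofNat,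
        Complex.conj_I, Complex.conj_ofReal, ← Complex.exp_conj]
      ring_nf
    have hexp2 : Complex.exp (Complex.I
        * ((2 * k * t - 1 / k * ∫ s in (0:ℝ)..t, (τ s - σ s ^ 2) : ℝ) : ℂ)) = Ep t ^ 2 := by
      rw [hEp, sq, ← Complex.exp_add]
      congr 1
      push_cast
      ring
    rw [hconj, ← hsc2 t, ← hexp2]
    ring
  -- continuity of the exp factor in Ffun and integrability of Ffun
  have hhc : ContinuousOn (fun t => Complex.exp ((-Complex.I)
      * ((2 * k * t - 1 / k * ∫ s in (0:ℝ)..t, (τ s - σ s ^ 2) : ℝ) : ℂ))) (Ici 0) := by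
    have hreal : ContinuousOn (fun t : ℝ => 2 * k * t - 1 / k * ∫ s in (0:ℝ)..t, (τ s - σ s ^ 2))
        (Ici 0) := ((continuous_const.mul continuous_id).continuousOn).sub
          (continuousOn_const.mul hQprim)
    exact Complex.continuous_exp.comp_continuousOn
      (continuousOn_const.mul (Complex.continuous_ofReal.comp_continuousOn hreal))
  have hFi : ∀ a b : ℝ, 0 ≤ a → a ≤ b →
      IntervalIntegrable (fun t => Ffun σ τ k t) volume a b := by
    intro a b ha hab
    have huIccsub : uIcc a b ⊆ Ici 0 := by
      rw [uIcc_of_le hab]; exact fun t ht => le_trans ha ht.1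
    have hcast : IntervalIntegrable
        (fun t => ((τ t - σ t ^ 2 : ℝ) : ℂ) + 2 * Complex.I * (k : ℂ) * ((σ t : ℝ) : ℂ))
        volume a b := (hQci a b ha hab).add ((hσci a b ha hab).const_mul _)
    have hcont2 : ContinuousOn (fun t => (-Complex.I / (2 * (k : ℂ))) * Complex.exp ((-Complex.I)
        * ((2 * k * t - 1 / k * ∫ s in (0:ℝ)..t, (τ s - σ s ^ 2) : ℝ) : ℂ))) (uIcc a b) :=
      continuousOn_const.mul (hhc.mono huIccsub)
    have := hcast.continuousOn_mul hcont2
    simpa only [Ffun, mul_assoc] using this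
  -- the eigensolution equations
  have hUeq : ∀ a b : ℝ, 0 ≤ a → a ≤ b →
      (U1 b = U1 a + ∫ t in a..b,
        ((-(σ t : ℂ)) * U1 t + ((τ t - σ t ^ 2 - k ^ 2 : ℝ) : ℂ) * U2 t)) ∧
      (U2 b = U2 a + ∫ t in a..b, (U1 t + (σ t : ℂ) * U2 t)) := by
    intro a b ha hab
    have huIccsub : uIcc a b ⊆ Ici 0 := by
      rw [uIcc_of_le hab]; exact fun t ht => le_trans ha ht.1
    have hFiab := hFi a b ha hab
    have hFY2 : IntervalIntegrable (fun t => Ffun σ τ k t * Y₂ t) volume a b :=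
      hFiab.mul_continuousOn (hY₂c.mono huIccsub)
    have hFcY1 : IntervalIntegrable (fun t => (starRingEnd ℂ) (Ffun σ τ k t) * Y₁ t) volume a b :=
      (my_II_conj hFiab).mul_continuousOn (hY₁c.mono huIccsub)
    have hpEp : IntervalIntegrable (fun t => pf t * Ep t) volume a b :=
      (hpfi a b ha hab).mul_continuousOn (hEpc.mono huIccsub)
    have hpEm : IntervalIntegrable (fun t => -pf t * Em t) volume a b :=
      ((hpfi a b ha hab).neg).mul_continuousOn (hEmc.mono huIccsub)
    have P1 : Y₁ b * Ep b = Y₁ a * Ep a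
        + ∫ t in a..b, (Ffun σ τ k t * Y₂ t * Ep t + Y₁ t * (pf t * Ep t)) :=
      my_prod_rule hab hFY2 hpEp (fun t ht => (hYeq a t ha ht.1).1)
        (fun t ht => hEp_eq a t ha ht.1)
    have P2 : Y₂ b * Em b = Y₂ a * Em a
        + ∫ t in a..b, ((starRingEnd ℂ) (Ffun σ τ k t) * Y₁ t * Em t + Y₂ t * (-pf t * Em t)) :=
      my_prod_rule hab hFcY1 hpEm (fun t ht => (hYeq a t ha ht.1).2)
        (fun t ht => hEm_eq a t ha ht.1)
    have i1 : IntervalIntegrable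
        (fun t => Ffun σ τ k t * Y₂ t * Ep t + Y₁ t * (pf t * Ep t)) volume a b :=
      (hFY2.mul_continuousOn (hEpc.mono huIccsub)).add
        (hpEp.continuousOn_mul (hY₁c.mono huIccsub))
    have i2 : IntervalIntegrable
        (fun t => (starRingEnd ℂ) (Ffun σ τ k t) * Y₁ t * Em t + Y₂ t * (-pf t * Em t))
        volume a b :=
      (hFcY1.mul_continuousOn (hEmc.mono huIccsub)).add
        (hpEm.continuousOn_mul (hY₂c.mono huIccsub))
    constructor
    · have hseq : ∀ t : ℝ, (-(σ t : ℂ)) * U1 t + ((τ t - σ t ^ 2 - k ^ 2 : ℝ) : ℂ) * U2 t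
          = Complex.I * (k : ℂ) * ((Ffun σ τ k t * Y₂ t * Ep t + Y₁ t * (pf t * Ep t))
            - ((starRingEnd ℂ) (Ffun σ τ k t) * Y₁ t * Em t + Y₂ t * (-pf t * Em t))) := by
        intro t
        rw [hFc_eq t, hF_eq t]
        simp only [hU1, hU2, hpf]
        push_cast
        linear_combination
          (-(Complex.I * (k : ℂ)
            * (((σ t : ℝ) : ℂ) - Complex.I * (((τ t : ℝ) : ℂ) - ((σ t : ℝ) : ℂ) ^ 2) / (2 * (k : ℂ)))
              * Em t * Y₂ t
            - Complex.I * (k : ℂ)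
              * (((σ t : ℝ) : ℂ) + Complex.I * (((τ t : ℝ) : ℂ) - ((σ t : ℝ) : ℂ) ^ 2) / (2 * (k : ℂ)))
              * Ep t * Y₁ t)) * hEpEm t
          + (-(((k : ℂ) ^ 2 - 2 * (k : ℂ) * ((((τ t : ℝ) : ℂ) - ((σ t : ℝ) : ℂ) ^ 2) / (2 * (k : ℂ))))
              * (Ep t * Y₁ t + Em t * Y₂ t))) * Complex.I_mul_I
          + (-((((τ t : ℝ) : ℂ) - ((σ t : ℝ) : ℂ) ^ 2) * (Ep t * Y₁ t + Em t * Y₂ t))) * hKinv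
      have hIeq : (∫ t in a..b, ((-(σ t : ℂ)) * U1 t + ((τ t - σ t ^ 2 - k ^ 2 : ℝ) : ℂ) * U2 t))
          = Complex.I * (k : ℂ)
            * ((∫ t in a..b, (Ffun σ τ k t * Y₂ t * Ep t + Y₁ t * (pf t * Ep t)))
              - ∫ t in a..b, ((starRingEnd ℂ) (Ffun σ τ k t) * Y₁ t * Em t
                + Y₂ t * (-pf t * Em t))) := by
        rw [← intervalIntegral.integral_sub i1 i2, ← intervalIntegral.integral_const_mul]
        exact intervalIntegral.integral_congr fun t _ => hseq t
      rw [hIeq]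
      simp only [hU1]
      linear_combination Complex.I * (k : ℂ) * P1 - Complex.I * (k : ℂ) * P2
    · have hseq2 : ∀ t : ℝ, U1 t + (σ t : ℂ) * U2 t
          = (Ffun σ τ k t * Y₂ t * Ep t + Y₁ t * (pf t * Ep t))
            + ((starRingEnd ℂ) (Ffun σ τ k t) * Y₁ t * Em t + Y₂ t * (-pf t * Em t)) := by
        intro t
        rw [hFc_eq t, hF_eq t]
        simp only [hU1, hU2, hpf]
        push_cast
        linear_combination
          (-((((σ t : ℝ) : ℂ) - Complex.I * (((τ t : ℝ) : ℂ) - ((σ t : ℝ) : ℂ) ^ 2) / (2 * (k : ℂ)))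
              * Em t * Y₂ t
            + (((σ t : ℝ) : ℂ) + Complex.I * (((τ t : ℝ) : ℂ) - ((σ t : ℝ) : ℂ) ^ 2) / (2 * (k : ℂ)))
              * Ep t * Y₁ t)) * hEpEm t
      have hIeq2 : (∫ t in a..b, (U1 t + (σ t : ℂ) * U2 t))
          = (∫ t in a..b, (Ffun σ τ k t * Y₂ t * Ep t + Y₁ t * (pf t * Ep t)))
            + ∫ t in a..b, ((starRingEnd ℂ) (Ffun σ τ k t) * Y₁ t * Em t
              + Y₂ t * (-pf t * Em t)) := by
        rw [← intervalIntegral.integral_add i1 i2]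
        exact intervalIntegral.integral_congr fun t _ => hseq2 t
      rw [hIeq2]
      simp only [hU2]
      linear_combination P1 + P2
  -- WKB asymptotics w.r.t. Q
  have hY1lim0 : Tendsto (fun t => Y₁ t - 1) atTop (nhds 0) := by
    simpa using hYlim₁.sub (tendsto_const_nhds (x := (1:ℂ)))
  have hW2 : Tendsto (fun t => U2 t - Ep t) atTop (nhds 0) := by
    have hbound : ∀ t, ‖U2 t - Ep t‖ ≤ ‖Y₁ t - 1‖ + ‖Y₂ t‖ := by
      intro t
      have heq : U2 t - Ep t = (Y₁ t - 1) * Ep t + Y₂ t * Em t := by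
        simp only [hU2]; ring
      rw [heq]
      calc ‖(Y₁ t - 1) * Ep t + Y₂ t * Em t‖
          ≤ ‖(Y₁ t - 1) * Ep t‖ + ‖Y₂ t * Em t‖ := norm_add_le _ _
        _ = ‖Y₁ t - 1‖ + ‖Y₂ t‖ := by
            simp only [norm_mul, hEp_norm, hEm_norm, mul_one]
    have hg : Tendsto (fun t => ‖Y₁ t - 1‖ + ‖Y₂ t‖) atTop (nhds 0) := by
      simpa using hY1lim0.norm.add hYlim₂.norm
    exact squeeze_zero_norm hbound hg
  have hW1 : Tendsto (fun t => U1 t - Complex.I * (k : ℂ) * Ep t) atTop (nhds 0) := by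
    have hbound : ∀ t, ‖U1 t - Complex.I * (k : ℂ) * Ep t‖
        ≤ k * ‖Y₁ t - 1‖ + k * ‖Y₂ t‖ := by
      intro t
      have heq : U1 t - Complex.I * (k : ℂ) * Ep t
          = Complex.I * (k : ℂ) * ((Y₁ t - 1) * Ep t) - Complex.I * (k : ℂ) * (Y₂ t * Em t) := by
        simp only [hU1]; ring
      rw [heq]
      calc ‖Complex.I * (k : ℂ) * ((Y₁ t - 1) * Ep t)
            - Complex.I * (k : ℂ) * (Y₂ t * Em t)‖
          ≤ ‖Complex.I * (k : ℂ) * ((Y₁ t - 1) * Ep t)‖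
            + ‖Complex.I * (k : ℂ) * (Y₂ t * Em t)‖ := norm_sub_le _ _
        _ = k * ‖Y₁ t - 1‖ + k * ‖Y₂ t‖ := by
            simp only [norm_mul, hEp_norm, hEm_norm, Complex.norm_I, one_mul, mul_one,
              Complex.norm_real, Real.norm_eq_abs, abs_of_pos hk]
    have hg : Tendsto (fun t => k * ‖Y₁ t - 1‖ + k * ‖Y₂ t‖) atTop (nhds 0) := by
      have := (hY1lim0.norm.const_mul k).add (hYlim₂.norm.const_mul k)
      simpa using this
    exact squeeze_zero_norm hbound hg
  constructor
  · exact ⟨U1, U2, ⟨hU1c, hU2c, fun a b ha hab => hUeq a b ha hab⟩,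
      by rw [hwkbQ]; exact hW2, by rw [hwkbQ]; exact hW1⟩
  · intro hσ2
    have hsq : IntegrableOn (fun t => σ t ^ 2) (Ioi 0) volume := hσ2.integrable_sq
    have htend : Tendsto (fun x => ∫ t in (0:ℝ)..x, σ t ^ 2) atTop
        (nhds (∫ t in Ioi (0:ℝ), σ t ^ 2)) :=
      intervalIntegral_tendsto_integral_Ioi 0 hsq tendsto_id
    set c : ℂ := Complex.exp (Complex.I
      * ((1 / (2 * k) * ∫ t in Ioi (0:ℝ), σ t ^ 2 : ℝ) : ℂ)) with hc
    have hc0 : c ≠ 0 := Complex.exp_ne_zero _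
    have hcc : c⁻¹ * c = 1 := inv_mul_cancel₀ hc0
    have hwkbτ_norm : ∀ x : ℝ, ‖wkbPhase τ k x‖ = 1 := by
      intro x
      simp [wkbPhase, Complex.norm_exp]
    have hd : Tendsto (fun x => Complex.exp (Complex.I
        * ((1 / (2 * k) * ∫ t in (0:ℝ)..x, σ t ^ 2 : ℝ) : ℂ))) atTop (nhds c) := by
      rw [hc]
      have h0 : Tendsto (fun x => 1 / (2 * k) * ∫ t in (0:ℝ)..x, σ t ^ 2) atTop
          (nhds (1 / (2 * k) * ∫ t in Ioi (0:ℝ), σ t ^ 2)) := htend.const_mul _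
      exact (Complex.continuous_exp.tendsto _).comp
        (((continuous_const.mul Complex.continuous_ofReal).tendsto _).comp h0)
    have hsplit : ∀ x : ℝ, 0 ≤ x → Ep x = wkbPhase τ k x
        * Complex.exp (Complex.I * ((1 / (2 * k) * ∫ t in (0:ℝ)..x, σ t ^ 2 : ℝ) : ℂ)) := by
      intro x hx
      have harg : Complex.I * ((k * x - 1 / (2 * k) * ∫ s in (0:ℝ)..x, (τ s - σ s ^ 2) : ℝ) : ℂ)
          = Complex.I * ((k * x - 1 / (2 * k) * ∫ t in (0:ℝ)..x, τ t : ℝ) : ℂ)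
            + Complex.I * ((1 / (2 * k) * ∫ t in (0:ℝ)..x, σ t ^ 2 : ℝ) : ℂ) := by
        rw [intervalIntegral.integral_sub (hτi 0 x le_rfl hx) (hσ2i 0 x le_rfl hx)]
        push_cast
        ring
      simp only [hEp, wkbPhase]
      rw [harg, Complex.exp_add]
    refine ⟨fun t => c⁻¹ * U1 t, fun t => c⁻¹ * U2 t,
      ⟨continuousOn_const.mul hU1c, continuousOn_const.mul hU2c, fun a b ha hab => ?_⟩,
      ?_, ?_⟩
    · obtain ⟨e1, e2⟩ := hUeq a b ha hab
      constructor
      · show c⁻¹ * U1 b = c⁻¹ * U1 a + ∫ t in a..b,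
          ((-(σ t : ℂ)) * (c⁻¹ * U1 t) + ((τ t - σ t ^ 2 - k ^ 2 : ℝ) : ℂ) * (c⁻¹ * U2 t))
        rw [e1, mul_add, ← intervalIntegral.integral_const_mul]
        congr 1
        refine intervalIntegral.integral_congr fun t _ => ?_
        ring
      · show c⁻¹ * U2 b = c⁻¹ * U2 a + ∫ t in a..b, ((c⁻¹ * U1 t) + (σ t : ℂ) * (c⁻¹ * U2 t))
        rw [e2, mul_add, ← intervalIntegral.integral_const_mul]
        congr 1
        refine intervalIntegral.integral_congr fun t _ => ?_
        ring
    · -- U2 asymptotics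
      have hterm1 : Tendsto (fun x => c⁻¹ * (U2 x - Ep x)) atTop (nhds 0) := by
        simpa using hW2.const_mul c⁻¹
      have hterm2 : Tendsto (fun x => (c⁻¹ * wkbPhase τ k x)
          * (Complex.exp (Complex.I * ((1 / (2 * k) * ∫ t in (0:ℝ)..x, σ t ^ 2 : ℝ) : ℂ)) - c))
          atTop (nhds 0) := by
        have hb : ∀ x, ‖(c⁻¹ * wkbPhase τ k x)
            * (Complex.exp (Complex.I * ((1 / (2 * k) * ∫ t in (0:ℝ)..x, σ t ^ 2 : ℝ) : ℂ)) - c)‖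
            ≤ ‖c⁻¹‖ * ‖Complex.exp (Complex.I
                * ((1 / (2 * k) * ∫ t in (0:ℝ)..x, σ t ^ 2 : ℝ) : ℂ)) - c‖ := by
          intro x
          rw [norm_mul, norm_mul, hwkbτ_norm, mul_one]
        have hg : Tendsto (fun x => ‖c⁻¹‖ * ‖Complex.exp (Complex.I
            * ((1 / (2 * k) * ∫ t in (0:ℝ)..x, σ t ^ 2 : ℝ) : ℂ)) - c‖) atTop (nhds 0) := by
          have := ((hd.sub (tendsto_const_nhds (x := c))).norm.const_mul ‖c⁻¹‖)
          simpa using this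
        exact squeeze_zero_norm hb hg
      have hsum := hterm1.add hterm2
      rw [add_zero] at hsum
      refine hsum.congr' ?_
      filter_upwards [eventually_ge_atTop (0:ℝ)] with x hx
      show c⁻¹ * (U2 x - Ep x) + (c⁻¹ * wkbPhase τ k x)
          * (Complex.exp (Complex.I * ((1 / (2 * k) * ∫ t in (0:ℝ)..x, σ t ^ 2 : ℝ) : ℂ)) - c)
        = c⁻¹ * U2 x - wkbPhase τ k x
      rw [hsplit x hx]
      linear_combination (-(wkbPhase τ k x)) * hcc
    · -- U1 asymptotics
      have hterm1 : Tendsto (fun x => c⁻¹ * (U1 x - Complex.I * (k : ℂ) * Ep x)) atTop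
          (nhds 0) := by
        simpa using hW1.const_mul c⁻¹
      have hterm2 : Tendsto (fun x => (Complex.I * (k : ℂ) * c⁻¹ * wkbPhase τ k x)
          * (Complex.exp (Complex.I * ((1 / (2 * k) * ∫ t in (0:ℝ)..x, σ t ^ 2 : ℝ) : ℂ)) - c))
          atTop (nhds 0) := by
        have hb : ∀ x, ‖(Complex.I * (k : ℂ) * c⁻¹ * wkbPhase τ k x)
            * (Complex.exp (Complex.I * ((1 / (2 * k) * ∫ t in (0:ℝ)..x, σ t ^ 2 : ℝ) : ℂ)) - c)‖
            ≤ ‖Complex.I * (k : ℂ) * c⁻¹‖ * ‖Complex.exp (Complex.I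
                * ((1 / (2 * k) * ∫ t in (0:ℝ)..x, σ t ^ 2 : ℝ) : ℂ)) - c‖ := by
          intro x
          rw [norm_mul, norm_mul, hwkbτ_norm, mul_one]
        have hg : Tendsto (fun x => ‖Complex.I * (k : ℂ) * c⁻¹‖ * ‖Complex.exp (Complex.I
            * ((1 / (2 * k) * ∫ t in (0:ℝ)..x, σ t ^ 2 : ℝ) : ℂ)) - c‖) atTop (nhds 0) := by
          have := ((hd.sub (tendsto_const_nhds (x := c))).norm.const_mul
            ‖Complex.I * (k : ℂ) * c⁻¹‖)
          simpa using this
        exact squeeze_zero_norm hb hg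
      have hsum := hterm1.add hterm2
      rw [add_zero] at hsum
      refine hsum.congr' ?_
      filter_upwards [eventually_ge_atTop (0:ℝ)] with x hx
      show c⁻¹ * (U1 x - Complex.I * (k : ℂ) * Ep x) + (Complex.I * (k : ℂ) * c⁻¹ * wkbPhase τ k x)
          * (Complex.exp (Complex.I * ((1 / (2 * k) * ∫ t in (0:ℝ)..x, σ t ^ 2 : ℝ) : ℂ)) - c)
        = c⁻¹ * U1 x - Complex.I * (k : ℂ) * wkbPhase τ k x
      rw [hsplit x hx]
      linear_combination (-(Complex.I * (k : ℂ) * wkbPhase τ k x)) * hcc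
end

section
/- Let σ ∈ L²_loc([0,∞)), τ ∈ L¹_loc([0,∞)) be real-valued and E = k² with k > 0. If there exists an eigensolution at energy E with WKB asymptotic behavior, then every eigensolution V at energy E is bounded, i.e. sup_{x ≥ 0} (|V₁(x)| + |V₂(x)|) < ∞. -/
open MeasureTheory Filter Set

lemma intervalIntegral_conj' {f : ℝ → ℂ} {x y : ℝ} :
    ∫ t in x..y, (starRingEnd ℂ) (f t) = (starRingEnd ℂ) (∫ t in x..y, f t) := by
  simp [intervalIntegral, integral_conj]

lemma fubini_pairs {x y : ℝ} (hxy : x ≤ y) {f g : ℝ → ℂ}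
    (hf : IntegrableOn f (Set.Ioc x y)) (hg : IntegrableOn g (Set.Ioc x y)) :
    (∫ t in Set.Ioc x y, (∫ s in Set.Ioc x t, f s) * g t)
      + (∫ t in Set.Ioc x y, f t * (∫ s in Set.Ioc x t, g s))
    = (∫ t in Set.Ioc x y, f t) * (∫ t in Set.Ioc x y, g t) := by
  set μ := volume.restrict (Set.Ioc x y) with hμ
  have hA : MeasurableSet {p : ℝ × ℝ | p.1 ≤ p.2} :=
    measurableSet_le measurable_fst measurable_snd
  have hB : MeasurableSet {p : ℝ × ℝ | p.2 ≤ p.1} :=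
    measurableSet_le measurable_snd measurable_fst
  have hh : Integrable (fun p : ℝ × ℝ => f p.1 * g p.2) (μ.prod μ) := hf.mul_prod hg
  have hh' : Integrable (fun p : ℝ × ℝ => f p.2 * g p.1) (μ.prod μ) := by
    simpa [mul_comm] using hg.mul_prod hf
  have key : ∀ t ∈ Set.Ioc x y, ∀ (F : ℝ → ℂ),
      (∫ s in Set.Ioc x t, F s) = ∫ s, (Set.Iic t).indicator F s ∂μ := by
    intro t ht F
    rw [hμ, integral_indicator measurableSet_Iic,
      Measure.restrict_restrict measurableSet_Iic, Set.inter_comm,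
      Set.Ioc_inter_Iic, min_eq_right ht.2]
  -- T₁
  have hT₁ : (∫ t, (∫ s in Set.Ioc x t, f s) * g t ∂μ)
      = ∫ p, ({p : ℝ × ℝ | p.1 ≤ p.2}).indicator (fun p => f p.1 * g p.2) p ∂(μ.prod μ) := by
    have e1 : (∫ t, (∫ s in Set.Ioc x t, f s) * g t ∂μ)
        = ∫ t, ∫ s, ({q : ℝ × ℝ | q.2 ≤ q.1}).indicator (fun q => f q.2 * g q.1) (t, s) ∂μ ∂μ := by
      refine integral_congr_ae ?_
      filter_upwards [ae_restrict_mem measurableSet_Ioc] with t ht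
      rw [key t ht f, ← integral_mul_const]
      refine integral_congr_ae (Eventually.of_forall fun s => ?_)
      by_cases hst : s ≤ t
      · simp [Set.indicator_of_mem, hst]
      · simp [Set.indicator_of_notMem, hst]
    have e2 : (∫ t, ∫ s, ({q : ℝ × ℝ | q.2 ≤ q.1}).indicator (fun q => f q.2 * g q.1) (t, s) ∂μ ∂μ)
        = ∫ p, ({q : ℝ × ℝ | q.2 ≤ q.1}).indicator (fun q => f q.2 * g q.1) p ∂(μ.prod μ) := by
      have := integral_integral (μ := μ) (ν := μ)
        (f := fun t s => ({q : ℝ × ℝ | q.2 ≤ q.1}).indicator (fun q => f q.2 * g q.1) (t, s))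
        (by exact hh'.indicator hB)
      simpa using this
    have e3 : (∫ p, ({q : ℝ × ℝ | q.2 ≤ q.1}).indicator (fun q => f q.2 * g q.1) p ∂(μ.prod μ))
        = ∫ p, ({p : ℝ × ℝ | p.1 ≤ p.2}).indicator (fun p => f p.1 * g p.2) p ∂(μ.prod μ) := by
      rw [← integral_prod_swap (f := ({q : ℝ × ℝ | q.2 ≤ q.1}).indicator (fun q => f q.2 * g q.1))]
      refine integral_congr_ae (Eventually.of_forall fun p => ?_)
      by_cases hp : p.1 ≤ p.2
      · simp [Set.indicator_of_mem, hp, Prod.swap]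
      · simp [Set.indicator_of_notMem, hp, Prod.swap]
    rw [e1, e2, e3]
  -- T₂
  have hT₂ : (∫ t, f t * (∫ s in Set.Ioc x t, g s) ∂μ)
      = ∫ p, ({p : ℝ × ℝ | p.2 ≤ p.1}).indicator (fun p => f p.1 * g p.2) p ∂(μ.prod μ) := by
    have e1 : (∫ t, f t * (∫ s in Set.Ioc x t, g s) ∂μ)
        = ∫ t, ∫ s, ({q : ℝ × ℝ | q.2 ≤ q.1}).indicator (fun q => f q.1 * g q.2) (t, s) ∂μ ∂μ := by
      refine integral_congr_ae ?_
      filter_upwards [ae_restrict_mem measurableSet_Ioc] with t ht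
      rw [key t ht g, ← integral_const_mul]
      refine integral_congr_ae (Eventually.of_forall fun s => ?_)
      by_cases hst : s ≤ t
      · simp [Set.indicator_of_mem, hst]
      · simp [Set.indicator_of_notMem, hst]
    have e2 : (∫ t, ∫ s, ({q : ℝ × ℝ | q.2 ≤ q.1}).indicator (fun q => f q.1 * g q.2) (t, s) ∂μ ∂μ)
        = ∫ p, ({q : ℝ × ℝ | q.2 ≤ q.1}).indicator (fun q => f q.1 * g q.2) p ∂(μ.prod μ) := by
      have := integral_integral (μ := μ) (ν := μ)
        (f := fun t s => ({q : ℝ × ℝ | q.2 ≤ q.1}).indicator (fun q => f q.1 * g q.2) (t, s))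
        (by exact hh.indicator hB)
      simpa using this
    rw [e1, e2]
  rw [hT₁, hT₂, ← integral_add ((hh.indicator hA)) ((hh.indicator hB))]
  have hdiag : (μ.prod μ) ({p : ℝ × ℝ | p.1 ≤ p.2} ∩ {p : ℝ × ℝ | p.2 ≤ p.1}) = 0 := by
    rw [Measure.prod_apply (hA.inter hB)]
    have h0 : ∀ a : ℝ, μ ({b : ℝ | a ≤ b} ∩ {b : ℝ | b ≤ a}) = 0 := by
      intro a
      have hsub : ({b : ℝ | a ≤ b} ∩ {b : ℝ | b ≤ a}) ⊆ {a} := by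
        intro b hb; simp only [Set.mem_inter_iff, Set.mem_setOf_eq] at hb
        simp [le_antisymm hb.2 hb.1]
      refine le_antisymm (le_trans (measure_mono hsub) ?_) zero_le
      rw [hμ]
      exact le_trans (Measure.restrict_le_self _) (by simp)
    simp [h0]
  have hsum : ∀ p : ℝ × ℝ,
      ({p : ℝ × ℝ | p.1 ≤ p.2}).indicator (fun p => f p.1 * g p.2) p
        + ({p : ℝ × ℝ | p.2 ≤ p.1}).indicator (fun p => f p.1 * g p.2) p
      = f p.1 * g p.2
        + ({p : ℝ × ℝ | p.1 ≤ p.2} ∩ {p : ℝ × ℝ | p.2 ≤ p.1}).indicator (fun p => f p.1 * g p.2) p := by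
    intro p
    rcases le_total p.1 p.2 with h1 | h1 <;> rcases le_total p.2 p.1 with h2 | h2 <;>
      simp [Set.indicator_apply, Set.mem_setOf_eq, h1, h2, Set.mem_inter_iff] <;>
      first
        | ring
        | (intro h; omega)
        | skip
  rw [show (fun p : ℝ × ℝ => ({p : ℝ × ℝ | p.1 ≤ p.2}).indicator (fun p => f p.1 * g p.2) p
        + ({p : ℝ × ℝ | p.2 ≤ p.1}).indicator (fun p => f p.1 * g p.2) p)
      = (fun p : ℝ × ℝ => f p.1 * g p.2
        + ({p : ℝ × ℝ | p.1 ≤ p.2} ∩ {p : ℝ × ℝ | p.2 ≤ p.1}).indicator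
            (fun p => f p.1 * g p.2) p) from funext hsum,
    integral_add hh (hh.indicator (hA.inter hB)),
    integral_indicator (hA.inter hB), Measure.restrict_eq_zero.mpr hdiag,
    integral_zero_measure, add_zero]
  exact integral_prod_mul f g

lemma parts_mul {x y : ℝ} (hxy : x ≤ y) {f g : ℝ → ℂ}
    (hf : IntervalIntegrable f volume x y) (hg : IntervalIntegrable g volume x y) (c d : ℂ) :
    (c + ∫ t in x..y, f t) * (d + ∫ t in x..y, g t)
      = c * d + ∫ t in x..y,
          ((c + ∫ s in x..t, f s) * g t + f t * (d + ∫ s in x..t, g s)) := by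
  have huIcc : Set.uIcc x y = Set.Icc x y := Set.uIcc_of_le hxy
  have hf' : IntegrableOn f (Set.Ioc x y) volume :=
    (intervalIntegrable_iff_integrableOn_Ioc_of_le hxy).1 hf
  have hg' : IntegrableOn g (Set.Ioc x y) volume :=
    (intervalIntegrable_iff_integrableOn_Ioc_of_le hxy).1 hg
  have hfI : IntegrableOn f (Set.uIcc x y) volume := by
    rw [huIcc, integrableOn_Icc_iff_integrableOn_Ioc]; exact hf'
  have hgI : IntegrableOn g (Set.uIcc x y) volume := by
    rw [huIcc, integrableOn_Icc_iff_integrableOn_Ioc]; exact hg'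
  have hFcont : ContinuousOn (fun t => ∫ s in x..t, f s) (Set.uIcc x y) :=
    intervalIntegral.continuousOn_primitive_interval hfI
  have hGcont : ContinuousOn (fun t => ∫ s in x..t, g s) (Set.uIcc x y) :=
    intervalIntegral.continuousOn_primitive_interval hgI
  have hcF : ContinuousOn (fun t => c + ∫ s in x..t, f s) (Set.uIcc x y) :=
    continuousOn_const.add hFcont
  have hdG : ContinuousOn (fun t => d + ∫ s in x..t, g s) (Set.uIcc x y) :=
    continuousOn_const.add hGcont
  have hFg : IntervalIntegrable (fun t => (c + ∫ s in x..t, f s) * g t) volume x y :=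
    hg.continuousOn_mul hcF
  have hfG : IntervalIntegrable (fun t => f t * (d + ∫ s in x..t, g s)) volume x y :=
    hf.mul_continuousOn hdG
  rw [intervalIntegral.integral_add hFg hfG]
  have e1 : (∫ t in x..y, (c + ∫ s in x..t, f s) * g t)
      = c * (∫ t in x..y, g t) + ∫ t in x..y, (∫ s in x..t, f s) * g t := by
    rw [intervalIntegral.integral_congr
        (g := fun t => c * g t + (∫ s in x..t, f s) * g t) (fun t _ => by ring),
      intervalIntegral.integral_add (hg.const_mul c) (hg.continuousOn_mul hFcont),
      intervalIntegral.integral_const_mul]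
  have e2 : (∫ t in x..y, f t * (d + ∫ s in x..t, g s))
      = (∫ t in x..y, f t) * d + ∫ t in x..y, f t * (∫ s in x..t, g s) := by
    rw [intervalIntegral.integral_congr
        (g := fun t => f t * d + f t * (∫ s in x..t, g s)) (fun t _ => by ring),
      intervalIntegral.integral_add (hf.mul_const d) (hf.mul_continuousOn hGcont),
      intervalIntegral.integral_mul_const]
  rw [e1, e2]
  have c1 : (∫ t in x..y, (∫ s in x..t, f s) * g t)
      = ∫ t in Set.Ioc x y, (∫ s in Set.Ioc x t, f s) * g t := by
    rw [intervalIntegral.integral_of_le hxy]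
    refine setIntegral_congr_ae measurableSet_Ioc (Eventually.of_forall fun t ht => ?_)
    rw [intervalIntegral.integral_of_le ht.1.le]
  have c2 : (∫ t in x..y, f t * (∫ s in x..t, g s))
      = ∫ t in Set.Ioc x y, f t * (∫ s in Set.Ioc x t, g s) := by
    rw [intervalIntegral.integral_of_le hxy]
    refine setIntegral_congr_ae measurableSet_Ioc (Eventually.of_forall fun t ht => ?_)
    rw [intervalIntegral.integral_of_le ht.1.le]
  have hfu := fubini_pairs hxy hf' hg'
  rw [c1, c2, intervalIntegral.integral_of_le hxy (f := f),
    intervalIntegral.integral_of_le hxy (f := g)]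
  linear_combination -hfu

lemma kernel1_integrable {σ τ : ℝ → ℝ} (hσ : L2loc σ) (hτ : L1loc τ) (E : ℝ)
    {W₁ W₂ : ℝ → ℂ} (h₁ : ContinuousOn W₁ (Set.Ici 0)) (h₂ : ContinuousOn W₂ (Set.Ici 0))
    {x : ℝ} (hx : 0 ≤ x) :
    IntervalIntegrable
      (fun t => (-(σ t : ℂ)) * W₁ t + ((τ t - σ t ^ 2 - E : ℝ) : ℂ) * W₂ t) volume 0 x := by
  have hIcc : Set.Icc (0:ℝ) x ⊆ Set.Ici 0 := fun t ht => ht.1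
  have hsub : Set.uIcc (0:ℝ) x ⊆ Set.Ici 0 := by rw [Set.uIcc_of_le hx]; exact hIcc
  have hσInt : IntegrableOn σ (Set.Icc 0 x) volume :=
    hσ.1.integrableOn_compact_subset hIcc isCompact_Icc
  have hσ2Int : IntegrableOn (fun t => σ t ^ 2) (Set.Icc 0 x) volume :=
    hσ.2.integrableOn_compact_subset hIcc isCompact_Icc
  have hτInt : IntegrableOn τ (Set.Icc 0 x) volume :=
    hτ.integrableOn_compact_subset hIcc isCompact_Icc
  have hconst : IntegrableOn (fun _ : ℝ => E) (Set.Icc 0 x) volume :=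
    integrableOn_const measure_Icc_lt_top.ne
  have hq : IntegrableOn (fun t => τ t - σ t ^ 2 - E) (Set.Icc 0 x) volume :=
    (hτInt.sub hσ2Int).sub hconst
  have toII : ∀ (F : ℝ → ℝ), IntegrableOn F (Set.Icc 0 x) volume →
      IntervalIntegrable (fun t => (F t : ℂ)) volume 0 x := by
    intro F hF
    exact (intervalIntegrable_iff_integrableOn_Ioc_of_le hx).2
      ((hF.mono_set Set.Ioc_subset_Icc_self).ofReal)
  have t1 : IntervalIntegrable (fun t => (-(σ t : ℂ)) * W₁ t) volume 0 x := by
    have := ((toII σ hσInt).neg).mul_continuousOn (h₁.mono hsub)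
    simpa using this
  have t2 : IntervalIntegrable (fun t => ((τ t - σ t ^ 2 - E : ℝ) : ℂ) * W₂ t) volume 0 x :=
    (toII _ hq).mul_continuousOn (h₂.mono hsub)
  exact t1.add t2

lemma kernel2_integrable {σ : ℝ → ℝ} (hσ : L2loc σ)
    {W₁ W₂ : ℝ → ℂ} (h₁ : ContinuousOn W₁ (Set.Ici 0)) (h₂ : ContinuousOn W₂ (Set.Ici 0))
    {x : ℝ} (hx : 0 ≤ x) :
    IntervalIntegrable (fun t => W₁ t + (σ t : ℂ) * W₂ t) volume 0 x := by
  have hIcc : Set.Icc (0:ℝ) x ⊆ Set.Ici 0 := fun t ht => ht.1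
  have hsub : Set.uIcc (0:ℝ) x ⊆ Set.Ici 0 := by rw [Set.uIcc_of_le hx]; exact hIcc
  have hσInt : IntegrableOn σ (Set.Icc 0 x) volume :=
    hσ.1.integrableOn_compact_subset hIcc isCompact_Icc
  have hσII : IntervalIntegrable (fun t => (σ t : ℂ)) volume 0 x :=
    (intervalIntegrable_iff_integrableOn_Ioc_of_le hx).2
      ((hσInt.mono_set Set.Ioc_subset_Icc_self).ofReal)
  exact ((h₁.mono hsub).intervalIntegrable).add (hσII.mul_continuousOn (h₂.mono hsub))

lemma wronskian_const {σ τ : ℝ → ℝ} (hσ : L2loc σ) (hτ : L1loc τ) {E : ℝ}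
    {U₁ U₂ V₁ V₂ : ℝ → ℂ} (hU : IsEigensolution σ τ E U₁ U₂)
    (hV : IsEigensolution σ τ E V₁ V₂) {x : ℝ} (hx : 0 ≤ x) :
    U₁ x * V₂ x - U₂ x * V₁ x = U₁ 0 * V₂ 0 - U₂ 0 * V₁ 0 := by
  obtain ⟨hU₁c, hU₂c, hUeq⟩ := hU
  obtain ⟨hV₁c, hV₂c, hVeq⟩ := hV
  have hg₁ : IntervalIntegrable
      (fun t => (-(σ t : ℂ)) * U₁ t + ((τ t - σ t ^ 2 - E : ℝ) : ℂ) * U₂ t) volume 0 x :=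
    kernel1_integrable hσ hτ E hU₁c hU₂c hx
  have hg₂ : IntervalIntegrable (fun t => U₁ t + (σ t : ℂ) * U₂ t) volume 0 x :=
    kernel2_integrable hσ hU₁c hU₂c hx
  have hh₁ : IntervalIntegrable
      (fun t => (-(σ t : ℂ)) * V₁ t + ((τ t - σ t ^ 2 - E : ℝ) : ℂ) * V₂ t) volume 0 x :=
    kernel1_integrable hσ hτ E hV₁c hV₂c hx
  have hh₂ : IntervalIntegrable (fun t => V₁ t + (σ t : ℂ) * V₂ t) volume 0 x :=
    kernel2_integrable hσ hV₁c hV₂c hx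
  have A : U₁ x * V₂ x = U₁ 0 * V₂ 0 + ∫ t in (0:ℝ)..x,
      (U₁ t * (V₁ t + (σ t : ℂ) * V₂ t)
        + ((-(σ t : ℂ)) * U₁ t + ((τ t - σ t ^ 2 - E : ℝ) : ℂ) * U₂ t) * V₂ t) := by
    have hp := parts_mul hx hg₁ hh₂ (U₁ 0) (V₂ 0)
    rw [← (hUeq 0 x le_rfl hx).1, ← (hVeq 0 x le_rfl hx).2] at hp
    rw [hp]
    congr 1
    refine intervalIntegral.integral_congr fun t ht => ?_
    rw [Set.uIcc_of_le hx] at ht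
    rw [← (hUeq 0 t le_rfl ht.1).1, ← (hVeq 0 t le_rfl ht.1).2]
  have B : U₂ x * V₁ x = U₂ 0 * V₁ 0 + ∫ t in (0:ℝ)..x,
      (U₂ t * ((-(σ t : ℂ)) * V₁ t + ((τ t - σ t ^ 2 - E : ℝ) : ℂ) * V₂ t)
        + (U₁ t + (σ t : ℂ) * U₂ t) * V₁ t) := by
    have hp := parts_mul hx hg₂ hh₁ (U₂ 0) (V₁ 0)
    rw [← (hUeq 0 x le_rfl hx).2, ← (hVeq 0 x le_rfl hx).1] at hp
    rw [hp]
    congr 1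
    refine intervalIntegral.integral_congr fun t ht => ?_
    rw [Set.uIcc_of_le hx] at ht
    rw [← (hUeq 0 t le_rfl ht.1).2, ← (hVeq 0 t le_rfl ht.1).1]
  have hEq : (∫ t in (0:ℝ)..x,
      (U₁ t * (V₁ t + (σ t : ℂ) * V₂ t)
        + ((-(σ t : ℂ)) * U₁ t + ((τ t - σ t ^ 2 - E : ℝ) : ℂ) * U₂ t) * V₂ t))
      = ∫ t in (0:ℝ)..x,
      (U₂ t * ((-(σ t : ℂ)) * V₁ t + ((τ t - σ t ^ 2 - E : ℝ) : ℂ) * V₂ t)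
        + (U₁ t + (σ t : ℂ) * U₂ t) * V₁ t) :=
    intervalIntegral.integral_congr fun t _ => by ring
  rw [A, B, hEq]
  ring

lemma conj_eigensolution {σ τ : ℝ → ℝ} {E : ℝ} {U₁ U₂ : ℝ → ℂ}
    (hU : IsEigensolution σ τ E U₁ U₂) :
    IsEigensolution σ τ E (fun t => (starRingEnd ℂ) (U₁ t)) (fun t => (starRingEnd ℂ) (U₂ t)) := by
  obtain ⟨h1, h2, heq⟩ := hU
  refine ⟨Complex.continuous_conj.comp_continuousOn h1,
    Complex.continuous_conj.comp_continuousOn h2, fun x y hx hxy => ?_⟩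
  constructor
  all_goals dsimp only
  · have h := congrArg (starRingEnd ℂ) (heq x y hx hxy).1
    rw [map_add, ← intervalIntegral_conj'] at h
    rw [h]
    congr 1
    refine intervalIntegral.integral_congr fun t _ => ?_
    simp [Complex.conj_ofReal]
  · have h := congrArg (starRingEnd ℂ) (heq x y hx hxy).2
    rw [map_add, ← intervalIntegral_conj'] at h
    rw [h]
    congr 1
    refine intervalIntegral.integral_congr fun t _ => ?_
    simp [Complex.conj_ofReal]

lemma wkbPhase_norm (g : ℝ → ℝ) (k x : ℝ) : ‖wkbPhase g k x‖ = 1 := by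
  simp [wkbPhase, Complex.norm_exp]

lemma bounded_of_evbounded {f : ℝ → ℂ} (hc : ContinuousOn f (Set.Ici 0))
    (hev : ∃ M : ℝ, ∀ᶠ x in atTop, ‖f x‖ ≤ M) :
    ∃ C : ℝ, 0 ≤ C ∧ ∀ x, 0 ≤ x → ‖f x‖ ≤ C := by
  obtain ⟨M, hM⟩ := hev
  obtain ⟨b, hb⟩ := eventually_atTop.1 hM
  obtain ⟨C, hC⟩ := (isCompact_Icc (a := (0:ℝ)) (b := max b 0)).exists_bound_of_continuousOn
    (hc.mono (fun t ht => ht.1))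
  refine ⟨max (max C M) 0, le_max_right _ _, fun x hx => ?_⟩
  rcases le_total x (max b 0) with h | h
  · exact le_trans (hC x ⟨hx, h⟩) (le_trans (le_max_left C M) (le_max_left _ _))
  · exact le_trans (hb x (le_trans (le_max_left b 0) h))
      (le_trans (le_max_right C M) (le_max_left _ _))

lemma wronskian_tendsto {τ : ℝ → ℝ} {k : ℝ} (hk : 0 < k) {U₁ U₂ : ℝ → ℂ}
    (hW : HasWKBwrt τ k U₁ U₂) :
    Tendsto (fun x => U₁ x * (starRingEnd ℂ) (U₂ x) - U₂ x * (starRingEnd ℂ) (U₁ x))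
      atTop (nhds (2 * Complex.I * (k : ℂ))) := by
  obtain ⟨ha, hb⟩ := hW
  set φ : ℝ → ℂ := fun x => wkbPhase τ k x with hφdef
  set a : ℝ → ℂ := fun x => U₂ x - φ x with hadef
  set b : ℝ → ℂ := fun x => U₁ x - Complex.I * (k : ℂ) * φ x with hbdef
  have key : ∀ x, U₁ x * (starRingEnd ℂ) (U₂ x) - U₂ x * (starRingEnd ℂ) (U₁ x)
      - 2 * Complex.I * (k : ℂ)
      = Complex.I * (k : ℂ) * (φ x * (starRingEnd ℂ) (a x))
        + b x * (starRingEnd ℂ) (φ x) + b x * (starRingEnd ℂ) (a x)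
        - φ x * (starRingEnd ℂ) (b x)
        + Complex.I * (k : ℂ) * (a x * (starRingEnd ℂ) (φ x))
        - a x * (starRingEnd ℂ) (b x) := by
    intro x
    have h1 : U₂ x = φ x + a x := by rw [hadef]; ring
    have h2 : U₁ x = Complex.I * (k : ℂ) * φ x + b x := by rw [hbdef]; ring
    have h3 : φ x * (starRingEnd ℂ) (φ x) = 1 := by
      rw [Complex.mul_conj, Complex.normSq_eq_norm_sq, wkbPhase_norm]
      norm_num
    rw [h1, h2]
    simp only [map_add, map_mul, Complex.conj_I, Complex.conj_ofReal]
    linear_combination (2 * Complex.I * (k : ℂ)) * h3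
  have na : Tendsto (fun x => ‖a x‖) atTop (nhds 0) := by simpa using ha.norm
  have nb : Tendsto (fun x => ‖b x‖) atTop (nhds 0) := by simpa using hb.norm
  have hg : Tendsto (fun x => k * ‖a x‖ + ‖b x‖ + ‖b x‖ * ‖a x‖ + ‖b x‖ + k * ‖a x‖
      + ‖a x‖ * ‖b x‖) atTop (nhds 0) := by
    have := (((((na.const_mul k).add nb).add (nb.mul na)).add nb).add
      (na.const_mul k)).add (na.mul nb)
    simpa using this
  have hsq : Tendsto (fun x => U₁ x * (starRingEnd ℂ) (U₂ x) - U₂ x * (starRingEnd ℂ) (U₁ x)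
      - 2 * Complex.I * (k : ℂ)) atTop (nhds 0) := by
    refine squeeze_zero_norm (fun x => ?_) hg
    rw [key x]
    have hφ : ‖φ x‖ = 1 := wkbPhase_norm τ k x
    have e1 : ‖Complex.I * (k : ℂ) * (φ x * (starRingEnd ℂ) (a x))‖ = k * ‖a x‖ := by
      simp [norm_mul, hφ, abs_of_pos hk]
    have e2 : ‖b x * (starRingEnd ℂ) (φ x)‖ = ‖b x‖ := by simp [norm_mul, hφ]
    have e3 : ‖b x * (starRingEnd ℂ) (a x)‖ = ‖b x‖ * ‖a x‖ := by simp [norm_mul]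
    have e4 : ‖φ x * (starRingEnd ℂ) (b x)‖ = ‖b x‖ := by simp [norm_mul, hφ]
    have e5 : ‖Complex.I * (k : ℂ) * (a x * (starRingEnd ℂ) (φ x))‖ = k * ‖a x‖ := by
      simp [norm_mul, hφ, abs_of_pos hk]
    have e6 : ‖a x * (starRingEnd ℂ) (b x)‖ = ‖a x‖ * ‖b x‖ := by simp [norm_mul]
    calc ‖_ + _ + _ - _ + _ - _‖
        ≤ ‖_ + _ + _ - _ + _‖ + ‖a x * (starRingEnd ℂ) (b x)‖ := norm_sub_le _ _
      _ ≤ (‖_ + _ + _ - _‖ + ‖Complex.I * (k : ℂ) * (a x * (starRingEnd ℂ) (φ x))‖)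
            + ‖a x * (starRingEnd ℂ) (b x)‖ := by gcongr; exact norm_add_le _ _
      _ ≤ ((‖_ + _ + _‖ + ‖φ x * (starRingEnd ℂ) (b x)‖)
            + ‖Complex.I * (k : ℂ) * (a x * (starRingEnd ℂ) (φ x))‖)
            + ‖a x * (starRingEnd ℂ) (b x)‖ := by gcongr; exact norm_sub_le _ _
      _ ≤ (((‖_ + _‖ + ‖b x * (starRingEnd ℂ) (a x)‖) + ‖φ x * (starRingEnd ℂ) (b x)‖)
            + ‖Complex.I * (k : ℂ) * (a x * (starRingEnd ℂ) (φ x))‖)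
            + ‖a x * (starRingEnd ℂ) (b x)‖ := by gcongr; exact norm_add_le _ _
      _ ≤ ((((‖Complex.I * (k : ℂ) * (φ x * (starRingEnd ℂ) (a x))‖
            + ‖b x * (starRingEnd ℂ) (φ x)‖) + ‖b x * (starRingEnd ℂ) (a x)‖)
            + ‖φ x * (starRingEnd ℂ) (b x)‖)
            + ‖Complex.I * (k : ℂ) * (a x * (starRingEnd ℂ) (φ x))‖)
            + ‖a x * (starRingEnd ℂ) (b x)‖ := by gcongr; exact norm_add_le _ _
      _ = k * ‖a x‖ + ‖b x‖ + ‖b x‖ * ‖a x‖ + ‖b x‖ + k * ‖a x‖ + ‖a x‖ * ‖b x‖ := by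
          rw [e1, e2, e3, e4, e5, e6]
  exact tendsto_sub_nhds_zero_iff.mp hsq

/-- existence of a WKB eigensolution at energy E = k² > 0 implies all
eigensolutions at energy E are bounded. -/
theorem all_solutions_bounded
    (σ τ : ℝ → ℝ) (hσ : L2loc σ) (hτ : L1loc τ)
    (E k : ℝ) (hk : 0 < k) (hE : E = k ^ 2)
    (hexists : ∃ U₁ U₂ : ℝ → ℂ, IsEigensolution σ τ E U₁ U₂ ∧ HasWKBwrt τ k U₁ U₂)
    (V₁ V₂ : ℝ → ℂ) (hV : IsEigensolution σ τ E V₁ V₂) :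
    ∃ C : ℝ, ∀ x : ℝ, 0 ≤ x → ‖V₁ x‖ + ‖V₂ x‖ ≤ C := by
  obtain ⟨U₁, U₂, hU, hW⟩ := hexists
  have hUc : IsEigensolution σ τ E (fun t => (starRingEnd ℂ) (U₁ t))
      (fun t => (starRingEnd ℂ) (U₂ t)) := conj_eigensolution hU
  -- Boundedness of U₁ and U₂ on [0, ∞)
  obtain ⟨C₂, hC₂0, hC₂⟩ : ∃ C : ℝ, 0 ≤ C ∧ ∀ x, 0 ≤ x → ‖U₂ x‖ ≤ C := by
    refine bounded_of_evbounded hU.2.1 ⟨2, ?_⟩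
    have hn : Tendsto (fun x => ‖U₂ x - wkbPhase τ k x‖) atTop (nhds 0) := by
      simpa using hW.1.norm
    filter_upwards [hn.eventually_lt_const (by norm_num : (0:ℝ) < 1)] with x hx
    calc ‖U₂ x‖ = ‖(U₂ x - wkbPhase τ k x) + wkbPhase τ k x‖ := by rw [sub_add_cancel]
      _ ≤ ‖U₂ x - wkbPhase τ k x‖ + ‖wkbPhase τ k x‖ := norm_add_le _ _
      _ ≤ 1 + 1 := by rw [wkbPhase_norm]; gcongr
      _ = 2 := by norm_num
  obtain ⟨C₁, hC₁0, hC₁⟩ : ∃ C : ℝ, 0 ≤ C ∧ ∀ x, 0 ≤ x → ‖U₁ x‖ ≤ C := by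
    refine bounded_of_evbounded hU.1 ⟨k + 1, ?_⟩
    have hn : Tendsto (fun x => ‖U₁ x - Complex.I * (k:ℂ) * wkbPhase τ k x‖) atTop (nhds 0) := by
      simpa using hW.2.norm
    filter_upwards [hn.eventually_lt_const (by norm_num : (0:ℝ) < 1)] with x hx
    calc ‖U₁ x‖ = ‖(U₁ x - Complex.I * (k:ℂ) * wkbPhase τ k x)
          + Complex.I * (k:ℂ) * wkbPhase τ k x‖ := by rw [sub_add_cancel]
      _ ≤ ‖U₁ x - Complex.I * (k:ℂ) * wkbPhase τ k x‖
            + ‖Complex.I * (k:ℂ) * wkbPhase τ k x‖ := norm_add_le _ _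
      _ ≤ 1 + k := by
          have h1 : ‖Complex.I * (k:ℂ) * wkbPhase τ k x‖ = k := by
            rw [norm_mul, norm_mul, wkbPhase_norm]
            simp [abs_of_pos hk]
          rw [h1]
          gcongr
      _ = k + 1 := by ring
  -- the Wronskian of U and conj U is constant and equals 2ik
  have hwconst : ∀ x, 0 ≤ x →
      U₁ x * (starRingEnd ℂ) (U₂ x) - U₂ x * (starRingEnd ℂ) (U₁ x)
        = U₁ 0 * (starRingEnd ℂ) (U₂ 0) - U₂ 0 * (starRingEnd ℂ) (U₁ 0) := by
    intro x hx
    exact wronskian_const hσ hτ hU hUc hx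
  have hlim1 : Tendsto (fun x => U₁ x * (starRingEnd ℂ) (U₂ x)
      - U₂ x * (starRingEnd ℂ) (U₁ x)) atTop
      (nhds (U₁ 0 * (starRingEnd ℂ) (U₂ 0) - U₂ 0 * (starRingEnd ℂ) (U₁ 0))) := by
    refine tendsto_const_nhds.congr' ?_
    filter_upwards [eventually_ge_atTop (0:ℝ)] with x hx
    exact (hwconst x hx).symm
  have hw0 : U₁ 0 * (starRingEnd ℂ) (U₂ 0) - U₂ 0 * (starRingEnd ℂ) (U₁ 0)
      = 2 * Complex.I * (k : ℂ) :=
    tendsto_nhds_unique hlim1 (wronskian_tendsto hk hW)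
  have hw : ∀ x, 0 ≤ x →
      U₁ x * (starRingEnd ℂ) (U₂ x) - U₂ x * (starRingEnd ℂ) (U₁ x)
        = 2 * Complex.I * (k : ℂ) := fun x hx => (hwconst x hx).trans hw0
  -- the two conserved pairings with V
  set p : ℂ := U₁ 0 * V₂ 0 - U₂ 0 * V₁ 0 with hpdef
  set q : ℂ := (starRingEnd ℂ) (U₁ 0) * V₂ 0 - (starRingEnd ℂ) (U₂ 0) * V₁ 0 with hqdef
  have hp : ∀ x, 0 ≤ x → U₁ x * V₂ x - U₂ x * V₁ x = p :=
    fun x hx => wronskian_const hσ hτ hU hV hx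
  have hq : ∀ x, 0 ≤ x →
      (starRingEnd ℂ) (U₁ x) * V₂ x - (starRingEnd ℂ) (U₂ x) * V₁ x = q :=
    fun x hx => wronskian_const hσ hτ hUc hV hx
  have h2k : ‖(2 * Complex.I * (k : ℂ))‖ = 2 * k := by
    simp [norm_mul, abs_of_pos hk]
  -- pointwise representation and bound
  have hVbound : ∀ x, 0 ≤ x →
      ‖V₁ x‖ ≤ (‖p‖ + ‖q‖) * C₁ / (2 * k) ∧ ‖V₂ x‖ ≤ (‖p‖ + ‖q‖) * C₂ / (2 * k) := by
    intro x hx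
    have h1 := hw x hx
    have h2 := hp x hx
    have h3 := hq x hx
    have id2 : (2 * Complex.I * (k : ℂ)) * V₂ x
        = p * (starRingEnd ℂ) (U₂ x) - q * U₂ x := by
      linear_combination -(V₂ x) * h1 + (starRingEnd ℂ) (U₂ x) * h2 - (U₂ x) * h3
    have id1 : (2 * Complex.I * (k : ℂ)) * V₁ x
        = p * (starRingEnd ℂ) (U₁ x) - q * U₁ x := by
      linear_combination -(V₁ x) * h1 + (starRingEnd ℂ) (U₁ x) * h2 - (U₁ x) * h3
    constructor
    · have hb : 2 * k * ‖V₁ x‖ ≤ (‖p‖ + ‖q‖) * C₁ := by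
        rw [← h2k, ← norm_mul, id1]
        calc ‖p * (starRingEnd ℂ) (U₁ x) - q * U₁ x‖
            ≤ ‖p * (starRingEnd ℂ) (U₁ x)‖ + ‖q * U₁ x‖ := norm_sub_le _ _
          _ = ‖p‖ * ‖U₁ x‖ + ‖q‖ * ‖U₁ x‖ := by simp [norm_mul]
          _ ≤ ‖p‖ * C₁ + ‖q‖ * C₁ := by gcongr <;> [exact hC₁ x hx; exact hC₁ x hx]
          _ = (‖p‖ + ‖q‖) * C₁ := by ring
      rw [le_div_iff₀ (by positivity)]
      linarith
    · have hb : 2 * k * ‖V₂ x‖ ≤ (‖p‖ + ‖q‖) * C₂ := by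
        rw [← h2k, ← norm_mul, id2]
        calc ‖p * (starRingEnd ℂ) (U₂ x) - q * U₂ x‖
            ≤ ‖p * (starRingEnd ℂ) (U₂ x)‖ + ‖q * U₂ x‖ := norm_sub_le _ _
          _ = ‖p‖ * ‖U₂ x‖ + ‖q‖ * ‖U₂ x‖ := by simp [norm_mul]
          _ ≤ ‖p‖ * C₂ + ‖q‖ * C₂ := by gcongr <;> [exact hC₂ x hx; exact hC₂ x hx]
          _ = (‖p‖ + ‖q‖) * C₂ := by ring
      rw [le_div_iff₀ (by positivity)]
      linarith
  refine ⟨(‖p‖ + ‖q‖) * C₁ / (2 * k) + (‖p‖ + ‖q‖) * C₂ / (2 * k), fun x hx => ?_⟩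
  obtain ⟨hb1, hb2⟩ := hVbound x hx
  exact add_le_add hb1 hb2
end
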